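/- Let n ≥ 2 be an integer and δ ∈ (1/2, 1] satisfy n(1−δ)/(2−δ) ≤ 1. Then there exists a probability space and a coherent random vector (Z_1, Z_2, …, Z_n) on it such that P(max_{1 ≤ i < j ≤ n} |Z_i − Z_j| ≥ δ) ≥ n(1−δ)/(2−δ). -/

import Mathlib

open MeasureTheory

noncomputable section

/-- The event that some pair of the variables differ by at least `δ`. -/
def maxEvent {Ω : Type} {n : ℕ} (X : Fin n → Ω → ℝ) (δ : ℝ) : Set Ω :=
  {ω | ∃ i j : Fin n, i < j ∧ δ ≤ |X i ω - X j ω|}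

/-- A random vector is coherent if each coordinate is a conditional expectation of the
indicator of a common event `A` with respect to some sub-σ-algebra. -/
def Coherent {Ω : Type} [mΩ : MeasurableSpace Ω] (P : Measure Ω) {n : ℕ}
    (X : Fin n → Ω → ℝ) : Prop :=
  ∃ (G : Fin n → MeasurableSpace Ω) (A : Set Ω),
    (∀ i, G i ≤ mΩ) ∧ MeasurableSet A ∧
    ∀ i, X i =ᵐ[P] P[A.indicator (fun _ => (1 : ℝ)) | G i]

/-!
Write `n = m + 2`. Take `2n + 1` atoms `b i`, `c i` (`i : Fin n`) and `u`, and `A = {c i} ∪ {u}`.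
Expert `j` forecasts `0` on `b j`, `1` on `c j`, `δ` on `b (j - 1)`, on the other `c i` and on `u`,
and `1 - δ` on `c (j - 1)` and on the other `b i`. With weights `δ (1 - δ)` on each `b i`,
`m (1 - δ)²` on each `c i` and `δ² - (m (1 - δ))²` on `u` (nonnegative exactly when
`n (1 - δ) / (2 - δ) ≤ 1`), each forecast is the conditional probability of `A` given its own
value. On `b i` and on `c i` the forecasts of experts `i` and `i + 1` are `δ` apart, and the
complement of `{u}` has probability `n (1 - δ) / (2 - δ)`.
-/

instance Sum.instDiscreteMeasurableSpace {α β : Type*} [MeasurableSpace α] [MeasurableSpace β]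
    [DiscreteMeasurableSpace α] [DiscreteMeasurableSpace β] : DiscreteMeasurableSpace (α ⊕ β) :=
  ⟨fun _ ↦ measurableSet_sum_iff.2 ⟨.of_discrete, .of_discrete⟩⟩

theorem Fintype.sum_comp_ite_ite {ι : Type*} [Fintype ι] [DecidableEq ι] {j k : ι} (hjk : j ≠ k)
    (F : ℝ → ℝ) (x y z : ℝ) :
    ∑ i, F (if i = j then x else if i = k then y else z)
      = F x + F y + (Fintype.card ι - 2) * F z := by
  have hF : ∀ i, F (if i = j then x else if i = k then y else z)
      = F z + ((if i = j then F x - F z else 0) + if i = k then F y - F z else 0) := by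
    intro i
    by_cases hij : i = j
    · subst hij; simp [hjk]
    · by_cases hik : i = k
      · subst hik; simp [hij]
      · simp [hij, hik]
  simp only [hF, Finset.sum_add_distrib, Finset.sum_ite_eq', Finset.mem_univ, if_true,
    Finset.sum_const, Finset.card_univ, nsmul_eq_mul]
  ring

theorem mem_maxEvent_of_ne {Ω : Type} {n : ℕ} {X : Fin n → Ω → ℝ} {δ : ℝ} {ω : Ω} {i j : Fin n}
    (hij : i ≠ j) (h : δ ≤ |X i ω - X j ω|) : ω ∈ maxEvent X δ := by
  rcases hij.lt_or_gt with hlt | hgt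
  · exact ⟨i, j, hlt, h⟩
  · exact ⟨j, i, hgt, abs_sub_comm (X i ω) _ ▸ h⟩

section WeightedMeasure

variable {Ω : Type*} [Fintype Ω] [MeasurableSpace Ω] [MeasurableSingletonClass Ω] {w : Ω → ℝ}

def weightedMeasure (w : Ω → ℝ) : Measure Ω :=
  ∑ ω, ENNReal.ofReal (w ω / ∑ ω', w ω') • Measure.dirac ω

theorem weightedMeasure_singleton (ω : Ω) :
    weightedMeasure w {ω} = ENNReal.ofReal (w ω / ∑ ω', w ω') := by
  classical
  simp [weightedMeasure, Measure.finsetSum_apply, Measure.dirac_apply', Pi.single_apply]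

instance : IsFiniteMeasure (weightedMeasure w) :=
  ⟨by simp [← Finset.coe_univ, ← sum_measure_singleton, weightedMeasure_singleton]⟩

theorem measureReal_weightedMeasure_singleton (hw : 0 ≤ w) (ω : Ω) :
    (weightedMeasure w).real {ω} = w ω / ∑ ω', w ω' := by
  rw [measureReal_def, weightedMeasure_singleton,
    ENNReal.toReal_ofReal (div_nonneg (hw ω) (Finset.sum_nonneg fun ω' _ ↦ hw ω'))]

theorem isProbabilityMeasure_weightedMeasure (hw : 0 ≤ w) (hW : ∑ ω, w ω ≠ 0) :
    IsProbabilityMeasure (weightedMeasure w) := by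
  have hW₀ : 0 ≤ ∑ ω, w ω := Finset.sum_nonneg fun ω _ ↦ hw ω
  constructor
  rw [← Finset.coe_univ, ← sum_measure_singleton]
  simp_rw [weightedMeasure_singleton]
  rw [← ENNReal.ofReal_sum_of_nonneg fun ω _ ↦ div_nonneg (hw ω) hW₀, ← Finset.sum_div,
    div_self hW, ENNReal.ofReal_one]

end WeightedMeasure

theorem ae_eq_condExp_comap_of_forall_sum_mul_sub_eq_zero {Ω : Type*} [Fintype Ω]
    [MeasurableSpace Ω] [DiscreteMeasurableSpace Ω] (μ : Measure Ω) [IsFiniteMeasure μ]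
    {X Y : Ω → ℝ} (h : ∀ c : ℝ → ℝ, ∑ ω, μ.real {ω} * (c (X ω) * (X ω - Y ω)) = 0) :
    X =ᵐ[μ] μ[Y | MeasurableSpace.comap X inferInstance] := by
  refine ae_eq_condExp_of_forall_setIntegral_eq Measurable.of_discrete.comap_le .of_finite
    (fun _ _ _ ↦ Integrable.of_finite.integrableOn) (fun s hs _ ↦ ?_)
    (comap_measurable X).aestronglyMeasurable
  obtain ⟨t, -, rfl⟩ := hs
  classical
  rw [← sub_eq_zero, ← integral_sub Integrable.of_finite.integrableOn
    Integrable.of_finite.integrableOn, ← integral_indicator .of_discrete,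
    integral_fintype Integrable.of_finite, ← h (t.indicator 1)]
  refine Finset.sum_congr rfl fun ω _ ↦ ?_
  by_cases hω : X ω ∈ t <;> simp [Set.indicator, hω]

namespace CyclicForecasts

variable (m : ℕ) (δ : ℝ)

/-- The atoms `b i`, `c i` and `u` are `.inl i`, `.inr (.inl i)` and `.inr (.inr ())`. -/
abbrev Atom : Type := Fin (m + 2) ⊕ Fin (m + 2) ⊕ Unit

def weight : Atom m → ℝ
  | .inl _ => δ * (1 - δ)
  | .inr (.inl _) => m * (1 - δ) ^ 2
  | .inr (.inr _) => δ ^ 2 - (m * (1 - δ)) ^ 2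

def forecast (j : Fin (m + 2)) : Atom m → ℝ
  | .inl i => if i = j then 0 else if i = j - 1 then δ else 1 - δ
  | .inr (.inl i) => 1 - if i = j then 0 else if i = j - 1 then δ else 1 - δ
  | .inr (.inr _) => δ

def event : Set (Atom m) := Set.range Sum.inr

variable {m δ}

theorem weight_nonneg (hδ₀ : 0 ≤ δ) (hδ₁ : δ ≤ 1) (hm : m * (1 - δ) ≤ δ) :
    0 ≤ weight m δ := by
  have hm₀ : 0 ≤ (m : ℝ) * (1 - δ) := mul_nonneg m.cast_nonneg (by linarith)
  rintro (i | i | u)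
  · exact mul_nonneg hδ₀ (by linarith)
  · exact mul_nonneg m.cast_nonneg (sq_nonneg _)
  · exact sub_nonneg.2 (pow_le_pow_left₀ hm₀ hm 2)

theorem sum_weight : ∑ ω, weight m δ ω = (2 - δ) * (δ + m * (1 - δ)) := by
  simp only [Fintype.sum_sum_type, weight, Finset.sum_const, Finset.card_univ, Fintype.card_fin,
    nsmul_eq_mul, Finset.univ_unique, Finset.card_singleton]
  push_cast
  ring

theorem sum_weight_pos (hδ₀ : 0 < δ) (hδ₁ : δ ≤ 1) : 0 < ∑ ω, weight m δ ω := by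
  have : 0 ≤ (m : ℝ) * (1 - δ) := mul_nonneg m.cast_nonneg (by linarith)
  rw [sum_weight]
  exact mul_pos (by linarith) (by linarith)

theorem sum_weight_mul_forecast_sub_indicator (j : Fin (m + 2)) (c : ℝ → ℝ) :
    ∑ ω, weight m δ ω * (c (forecast m δ j ω) *
      (forecast m δ j ω - (event m).indicator (fun _ ↦ 1) ω)) = 0 := by
  have hj : j ≠ j - 1 := by simp [eq_comm (a := j)]
  simp only [Fintype.sum_sum_type, weight, forecast, event, Set.indicator_apply, Set.mem_range,
    reduceCtorEq, exists_false, if_false, exists_apply_eq_apply, if_true]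
  rw [Fintype.sum_comp_ite_ite hj (fun v ↦ δ * (1 - δ) * (c v * (v - 0))),
    Fintype.sum_comp_ite_ite hj (fun v ↦ m * (1 - δ) ^ 2 * (c (1 - v) * (1 - v - 1)))]
  simp only [Fintype.card_fin, Finset.univ_unique, Finset.sum_singleton, sub_zero,
    sub_sub_cancel]
  push_cast
  ring

theorem coherent_forecast (hw : 0 ≤ weight m δ) :
    Coherent (weightedMeasure (weight m δ)) (forecast m δ) := by
  refine ⟨fun j ↦ MeasurableSpace.comap (forecast m δ j) inferInstance, event m,
    fun j ↦ Measurable.of_discrete.comap_le, .of_discrete, fun j ↦ ?_⟩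
  refine ae_eq_condExp_comap_of_forall_sum_mul_sub_eq_zero _ fun c ↦ ?_
  simp_rw [measureReal_weightedMeasure_singleton hw, div_mul_eq_mul_div, ← Finset.sum_div,
    sum_weight_mul_forecast_sub_indicator, zero_div]

theorem compl_inr_inr_subset_maxEvent (hδ : 0 ≤ δ) :
    ({.inr (.inr ())} : Set (Atom m))ᶜ ⊆ maxEvent (forecast m δ) δ := by
  have hi : ∀ i : Fin (m + 2), i ≠ i + 1 := by simp
  rintro (i | i | _) hω
  · refine mem_maxEvent_of_ne (hi i) ?_
    simp [forecast, hi, abs_of_nonneg hδ]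
  · refine mem_maxEvent_of_ne (hi i) ?_
    simp [forecast, hi, abs_of_nonneg hδ]
  · exact absurd rfl hω

theorem measureReal_compl_inr_inr (hw : 0 ≤ weight m δ) (hW : ∑ ω, weight m δ ω ≠ 0) :
    (weightedMeasure (weight m δ)).real {.inr (.inr ())}ᶜ = (m + 2) * (1 - δ) / (2 - δ) := by
  have := isProbabilityMeasure_weightedMeasure hw hW
  rw [probReal_compl_eq_one_sub .of_discrete, measureReal_weightedMeasure_singleton hw]
  rw [sum_weight] at hW ⊢
  have h2δ : 2 - δ ≠ 0 := left_ne_zero_of_mul hW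
  have hmδ : δ + m * (1 - δ) ≠ 0 := right_ne_zero_of_mul hW
  simp only [weight]
  field_simp
  ring

end CyclicForecasts

open CyclicForecasts in
theorem exists_coherent_attaining_bound (n : ℕ) (hn : 2 ≤ n) (δ : ℝ)
    (hδ : δ ∈ Set.Ioc (1 / 2 : ℝ) 1) (hsmall : (n : ℝ) * (1 - δ) / (2 - δ) ≤ 1) :
    ∃ (Ω : Type) (mΩ : MeasurableSpace Ω) (P : Measure Ω),
      IsProbabilityMeasure P ∧ ∃ Z : Fin n → Ω → ℝ, Coherent P Z ∧
        (n : ℝ) * (1 - δ) / (2 - δ) ≤ (P (maxEvent Z δ)).toReal := by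
  obtain ⟨m, rfl⟩ := Nat.exists_eq_add_of_le' hn
  obtain ⟨hδ₀, hδ₁⟩ := hδ
  have hm : (m : ℝ) * (1 - δ) ≤ δ := by
    rw [div_le_one (by linarith)] at hsmall
    push_cast at hsmall
    linarith
  have hw := weight_nonneg (by linarith) hδ₁ hm
  have hW := (sum_weight_pos (m := m) (by linarith) hδ₁).ne'
  refine ⟨Atom m, inferInstance, weightedMeasure (weight m δ),
    isProbabilityMeasure_weightedMeasure hw hW, forecast m δ, coherent_forecast hw, ?_⟩
  push_cast
  rw [← measureReal_compl_inr_inr hw hW]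
  exact measureReal_mono (compl_inr_inr_subset_maxEvent (by linarith))
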